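/- arXiv:1502.02231 — 2 statements merged into one kernel-verified Lean document; each statement's English description precedes it below -/
import Mathlib

section
/- The subgroup H equals the set of elements s ∘ σ_A ∈ G (s ∈ S_n, A ⊆ {1,…,n}) for which |A| is even. In particular, for each single index i, σ_i ∉ H. -/
/-- The permutation action of `s : Perm (Fin n)` on `Fin n → K` (permuting the factors). -/
def permAct (K : Type*) {n : ℕ} (s : Equiv.Perm (Fin n)) : Equiv.Perm (Fin n → K) :=
  Equiv.arrowCongr s (Equiv.refl K)

/-- The involution `σ_A` of `K^n` applying `σ` to the coordinates in `A`. -/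
def sigmaOn {K : Type*} (σ : Equiv.Perm K) {n : ℕ} (A : Finset (Fin n)) :
    Equiv.Perm (Fin n → K) :=
  Equiv.piCongrRight fun i => if i ∈ A then σ else Equiv.refl K

/-- The covering transformation group `G`, generated by `S_n` and all the `σ_A`. -/
def bigG {K : Type*} (σ : Equiv.Perm K) (n : ℕ) : Subgroup (Equiv.Perm (Fin n → K)) :=
  Subgroup.closure (Set.range (permAct K (n := n)) ∪ Set.range (sigmaOn σ (n := n)))

/-- The subgroup `H ≤ G`, generated by `S_n` and the `σ_{ij}` applying `σ` to exactly two
coordinates. -/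
def bigH {K : Type*} (σ : Equiv.Perm K) (n : ℕ) : Subgroup (Equiv.Perm (Fin n → K)) :=
  Subgroup.closure (Set.range (permAct K (n := n)) ∪
    {g | ∃ A : Finset (Fin n), A.card = 2 ∧ g = sigmaOn σ A})


section Aux
variable {K : Type*} {n : ℕ}

lemma permAct_apply (s : Equiv.Perm (Fin n)) (f : Fin n → K) (i : Fin n) :
    permAct K s f i = f (s.symm i) := rfl

lemma sigmaOn_apply (σ : Equiv.Perm K) (A : Finset (Fin n)) (f : Fin n → K) (i : Fin n) :
    sigmaOn σ A f i = if i ∈ A then σ (f i) else f i := by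
  show (if i ∈ A then σ else Equiv.refl K) (f i) = _
  split <;> rfl

lemma permAct_mul (s t : Equiv.Perm (Fin n)) :
    permAct K (s * t) = permAct K s * permAct K t := rfl

lemma sigmaOn_empty (σ : Equiv.Perm K) : sigmaOn σ (∅ : Finset (Fin n)) = 1 := by
  ext f i; simp [sigmaOn_apply]

open scoped symmDiff in
lemma sigmaOn_mul (σ : Equiv.Perm K) (hinv : ∀ x : K, σ (σ x) = x)
    (A B : Finset (Fin n)) : sigmaOn σ A * sigmaOn σ B = sigmaOn σ (A ∆ B) := by
  ext f i
  simp only [Equiv.Perm.mul_apply, sigmaOn_apply, Finset.mem_symmDiff]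
  by_cases hA : i ∈ A <;> by_cases hB : i ∈ B <;> simp [hA, hB, hinv]

lemma sigmaOn_comm (σ : Equiv.Perm K) (A : Finset (Fin n)) (t : Equiv.Perm (Fin n)) :
    sigmaOn σ A * permAct K t = permAct K t * sigmaOn σ (A.image t.symm) := by
  ext f i
  simp only [Equiv.Perm.mul_apply, sigmaOn_apply, permAct_apply]
  have : t.symm i ∈ A.image t.symm ↔ i ∈ A := by
    simp [Finset.mem_image]
  simp only [this]

open scoped symmDiff in
lemma card_symmDiff_par (A B : Finset (Fin n)) :
    (A ∆ B).card % 2 = (A.card + B.card) % 2 := by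
  have h1 : (A ∆ B).card = (A \ B).card + (B \ A).card := by
    rw [symmDiff_def, Finset.sup_eq_union]
    exact Finset.card_union_of_disjoint (Finset.sdiff_disjoint.mono_right Finset.sdiff_subset)
  have h2 : (A \ B).card + (A ∩ B).card = A.card := Finset.card_sdiff_add_card_inter A B
  have h3 : (B \ A).card + (B ∩ A).card = B.card := Finset.card_sdiff_add_card_inter B A
  have h4 : A ∩ B = B ∩ A := Finset.inter_comm A B
  rw [h4] at h2
  omega

lemma key_trivial (σ : Equiv.Perm K) (hfree : ∀ x : K, σ x ≠ x) [Nonempty K]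
    (s : Equiv.Perm (Fin n)) (B : Finset (Fin n))
    (h : permAct K s * sigmaOn σ B = 1) : B = ∅ := by
  by_contra hB
  obtain ⟨j, hj⟩ := Finset.nonempty_iff_ne_empty.mpr hB
  obtain ⟨x⟩ := ‹Nonempty K›
  have := congrFun (congrArg (fun g => g.toFun (fun _ => x)) h) (s j)
  simp only [Equiv.Perm.mul_apply, Equiv.toFun_as_coe, Equiv.Perm.coe_one, id_eq] at this
  rw [permAct_apply, sigmaOn_apply, Equiv.symm_apply_apply] at this
  simp [hj] at this
  exact hfree x this

lemma even_sigmaOn_mem (σ : Equiv.Perm K) (hinv : ∀ x : K, σ (σ x) = x) :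
    ∀ (A : Finset (Fin n)), Even A.card → sigmaOn σ A ∈ bigH σ n := by
  intro A
  induction A using Finset.strongInduction with
  | _ A ih =>
    intro hev
    rcases A.eq_empty_or_nonempty with rfl | ⟨a, ha⟩
    · rw [sigmaOn_empty]; exact one_mem _
    · have h2 : 1 < A.card := by
        rcases hev with ⟨k, hk⟩
        have : 0 < A.card := Finset.card_pos.mpr ⟨a, ha⟩
        omega
      obtain ⟨b, hb, hba⟩ := Finset.exists_mem_ne h2 a
      set P : Finset (Fin n) := {a, b} with hP
      have hPsub : P ⊆ A := by
        intro x hx; simp [hP] at hx; rcases hx with rfl | rfl <;> assumption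
      have hPcard : P.card = 2 := by
        rw [hP, Finset.card_insert_of_notMem (by simp [hba.symm]), Finset.card_singleton]
      have hsplit : sigmaOn σ A = sigmaOn σ P * sigmaOn σ (A \ P) := by
        rw [sigmaOn_mul σ hinv]
        congr 1
        ext x
        have hx := @hPsub x
        simp only [Finset.mem_symmDiff, Finset.mem_sdiff]
        tauto
      have hmemP : sigmaOn σ P ∈ bigH σ n :=
        Subgroup.subset_closure (Or.inr ⟨P, hPcard, rfl⟩)
      have hssub : A \ P ⊂ A := Finset.sdiff_ssubset hPsub (by simp [hP])
      have hcard : (A \ P).card = A.card - 2 := by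
        rw [Finset.card_sdiff_of_subset hPsub, hPcard]
      have hev' : Even (A \ P).card := by
        rcases hev with ⟨k, hk⟩; rw [hcard]; exact ⟨k - 1, by omega⟩
      rw [hsplit]
      exact mul_mem hmemP (ih _ hssub hev')
end Aux

open scoped symmDiff in
/-- `H` is exactly the set of elements `s ∘ σ_A` of `G` with `|A|` even;
in particular `σ_i ∉ H` for every single index `i`. -/
theorem stmt2 {K : Type*} [Infinite K] (σ : Equiv.Perm K)
    (hinv : ∀ x : K, σ (σ x) = x) (hfree : ∀ x : K, σ x ≠ x)
    (n : ℕ) (hn : 2 ≤ n) :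
    (∀ g : Equiv.Perm (Fin n → K), g ∈ bigH σ n ↔
        ∃ (s : Equiv.Perm (Fin n)) (A : Finset (Fin n)),
          Even A.card ∧ g = permAct K s * sigmaOn σ A) ∧
    (∀ i : Fin n, sigmaOn σ {i} ∉ bigH σ n) := by
  classical
  have hmem : ∀ g : Equiv.Perm (Fin n → K), g ∈ bigH σ n ↔
      ∃ (s : Equiv.Perm (Fin n)) (A : Finset (Fin n)),
        Even A.card ∧ g = permAct K s * sigmaOn σ A := by
    intro g
    constructor
    · intro hg
      induction hg using Subgroup.closure_induction with
      | mem x hx =>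
        rcases hx with ⟨s, rfl⟩ | ⟨A, hA, rfl⟩
        · exact ⟨s, ∅, by simp, by rw [sigmaOn_empty, mul_one]⟩
        · refine ⟨1, A, by rw [hA]; exact even_two, ?_⟩
          have h1 : permAct K (1 : Equiv.Perm (Fin n)) = 1 := rfl
          rw [h1, one_mul]
      | one => exact ⟨1, ∅, by simp, by rw [sigmaOn_empty, mul_one]; rfl⟩
      | mul x y hx hy ihx ihy =>
        obtain ⟨s, A, hA, rfl⟩ := ihx
        obtain ⟨t, B, hB, rfl⟩ := ihy
        refine ⟨s * t, (A.image t.symm) ∆ B, ?_, ?_⟩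
        · rw [Nat.even_iff] at hA hB ⊢
          have h1 := card_symmDiff_par (A.image t.symm) B
          have h2 : (A.image t.symm).card = A.card :=
            Finset.card_image_of_injective A t.symm.injective
          omega
        · rw [permAct_mul, ← sigmaOn_mul σ hinv,
            show permAct K s * sigmaOn σ A * (permAct K t * sigmaOn σ B)
              = permAct K s * (sigmaOn σ A * permAct K t) * sigmaOn σ B by group,
            sigmaOn_comm]
          group
      | inv x hx ihx =>
        obtain ⟨s, A, hA, rfl⟩ := ihx
        refine ⟨s⁻¹, A.image s, ?_, ?_⟩
        · rwa [Finset.card_image_of_injective A s.injective]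
        · have hsig : (sigmaOn σ A)⁻¹ = sigmaOn σ A := by
            rw [inv_eq_iff_mul_eq_one, sigmaOn_mul σ hinv, symmDiff_self,
              Finset.bot_eq_empty, sigmaOn_empty]
          have hperm : (permAct K s)⁻¹ = permAct K s⁻¹ := by
            rw [inv_eq_iff_mul_eq_one, ← permAct_mul, mul_inv_cancel]; rfl
          rw [mul_inv_rev, hsig, hperm, sigmaOn_comm]
          congr 2
    · rintro ⟨s, A, hA, rfl⟩
      exact mul_mem (Subgroup.subset_closure (Or.inl ⟨s, rfl⟩))
        (even_sigmaOn_mem σ hinv A hA)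
  refine ⟨hmem, ?_⟩
  intro i hi
  rw [hmem] at hi
  obtain ⟨s, A, hA, hEq⟩ := hi
  have h1 : permAct K s * sigmaOn σ (A ∆ {i}) = 1 := by
    rw [← sigmaOn_mul σ hinv, ← mul_assoc, ← hEq, sigmaOn_mul σ hinv, symmDiff_self,
      Finset.bot_eq_empty, sigmaOn_empty]
  have h2 := key_trivial σ hfree s _ h1
  have h3 := card_symmDiff_par A ({i} : Finset (Fin n))
  rw [h2] at h3
  simp only [Finset.card_empty, Finset.card_singleton] at h3
  rw [Nat.even_iff] at hA
  omega
end

section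
/- In the lifting situation of a natural-automorphism proof: if g = g₁ × … × g_n ∈ Aut(K)^n is an automorphism of K^n \ Γ_K that commutes with the covering group action (i.e. normalizes G), then for each i, g_i = g₁ or g_i = g₁ ∘ σ, and moreover g₁ ∘ σ = σ ∘ g₁. -/
/-- The product automorphism `g₁ × ⋯ × g_n` of `K^n`. -/
def prodPerm {K : Type*} {n : ℕ} (g : Fin n → Equiv.Perm K) : Equiv.Perm (Fin n → K) :=
  Equiv.piCongrRight g

/-- `Γ_K ⊆ K^n`: the preimage of the big diagonal of `E^(n)`, i.e. the locus where the
`2n` points `x₁,…,x_n,σ(x₁),…,σ(x_n)` are not pairwise distinct. -/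
def GammaK {K : Type*} (σ : Equiv.Perm K) (n : ℕ) : Set (Fin n → K) :=
  {x | ∃ s t : Fin n, s ≠ t ∧ (x s = x t ∨ x s = σ (x t))}

/-!
Every element of the covering group `G` acts on `Kⁿ` as `x ↦ (τⱼ (x_{s j}))ⱼ` with `s ∈ Sₙ` and
`τⱼ ∈ ⟨σ⟩ = {1, σ}`; such a map whose `i`-th output depends on the `k`-th input alone through `f`
has `s i = k` and `τᵢ = f` (if `|K| ≥ 2`). Conjugating the transposition `(1 i)` by `g = g₁ × ⋯ × gₙ` gives a
map whose `i`-th output is `gᵢ g₁⁻¹` of the first input, and conjugating `σ_{1}` gives one whose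
first output is `g₁ σ g₁⁻¹` of the first input. As `g` normalizes `G`, both `gᵢ g₁⁻¹` and
`g₁ σ g₁⁻¹` lie in `{1, σ}`.
-/

open Equiv

theorem eq_one_or_eq_of_mem_zpowers {G : Type*} [Group G] {a b : G} (ha : a * a = 1)
    (hb : b ∈ Subgroup.zpowers a) : b = 1 ∨ b = a := by
  obtain ⟨k, rfl⟩ := Subgroup.mem_zpowers_iff.1 hb
  have ha2 : a ^ (2 : ℤ) = 1 := by rw [zpow_two, ha]
  rcases Int.even_or_odd' k with ⟨m, rfl | rfl⟩
  · left; rw [zpow_mul, ha2, one_zpow]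
  · right; rw [zpow_add_one, zpow_mul, ha2, one_zpow, one_mul]

section

variable {K : Type*}

def wreathSubgroup (H : Subgroup (Perm K)) (n : ℕ) : Subgroup (Perm (Fin n → K)) where
  carrier := {u | ∃ (s : Perm (Fin n)) (τ : Fin n → Perm K),
    (∀ j, τ j ∈ H) ∧ ∀ x j, u x j = τ j (x (s j))}
  one_mem' := ⟨1, 1, fun _ => H.one_mem, fun _ _ => rfl⟩
  mul_mem' := by
    rintro u v ⟨su, τu, hτu, hu⟩ ⟨sv, τv, hτv, hv⟩
    exact ⟨su.trans sv, fun j => τu j * τv (su j), fun j => H.mul_mem (hτu j) (hτv _),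
      fun x j => by simp only [Perm.mul_apply, hu, hv, trans_apply]⟩
  inv_mem' := by
    rintro u ⟨s, τ, hτ, hu⟩
    refine ⟨s.symm, fun j => (τ (s.symm j))⁻¹, fun j => H.inv_mem (hτ _), fun x j => ?_⟩
    have h := hu (u⁻¹ x) (s.symm j)
    rw [Perm.coe_inv, apply_symm_apply, apply_symm_apply] at h
    rw [h]
    simp

variable {n : ℕ}

theorem permAct_mem_wreathSubgroup (H : Subgroup (Perm K)) (s : Perm (Fin n)) :
    permAct K s ∈ wreathSubgroup H n :=
  ⟨s.symm, 1, fun _ => H.one_mem, fun _ _ => rfl⟩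

theorem sigmaOn_mem_wreathSubgroup (σ : Perm K) (A : Finset (Fin n)) :
    sigmaOn σ A ∈ wreathSubgroup (Subgroup.zpowers σ) n := by
  refine ⟨1, fun j => if j ∈ A then σ else 1, fun j => ?_, fun x j => rfl⟩
  dsimp only
  split_ifs
  exacts [Subgroup.mem_zpowers σ, Subgroup.one_mem _]

theorem bigG_le_wreathSubgroup (σ : Perm K) :
    bigG σ n ≤ wreathSubgroup (Subgroup.zpowers σ) n :=
  (Subgroup.closure_le _).2 <| Set.union_subset
    (Set.range_subset_iff.2 (permAct_mem_wreathSubgroup _))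
    (Set.range_subset_iff.2 (sigmaOn_mem_wreathSubgroup σ))

theorem mem_of_apply_eq_of_mem_wreathSubgroup {H : Subgroup (Perm K)} {u : Perm (Fin n → K)}
    (hu : u ∈ wreathSubgroup H n) {i k : Fin n} {f : Perm K} (h : ∀ x, u x i = f (x k)) :
    f ∈ H := by
  obtain ⟨s, τ, hτ, hux⟩ := hu
  rcases subsingleton_or_nontrivial K with _ | _
  · exact Subsingleton.elim (1 : Perm K) f ▸ H.one_mem
  have hsi : s i = k := by
    by_contra hne
    obtain ⟨p, q, hpq⟩ := exists_pair_ne K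
    have hp := (h fun _ => p).symm.trans (hux _ i)
    have hq := (h (Function.update (fun _ => p) (s i) q)).symm.trans (hux _ i)
    rw [Function.update_of_ne (Ne.symm hne), Function.update_self] at hq
    exact hpq ((τ i).injective (hp.symm.trans hq))
  have hf : f = τ i := Equiv.ext fun b => by
    simpa only [hsi] using (h fun _ => b).symm.trans (hux _ i)
  exact hf ▸ hτ i

theorem prodPerm_conj_permAct_swap_apply (g : Fin n → Perm K) (i j : Fin n) (x : Fin n → K) :
    (prodPerm g * permAct K (swap i j) * (prodPerm g)⁻¹) x j = (g j * (g i)⁻¹) (x i) := by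
  simp [prodPerm, permAct, Perm.mul_apply]

theorem prodPerm_conj_sigmaOn_singleton_apply (σ : Perm K) (g : Fin n → Perm K) (i : Fin n)
    (x : Fin n → K) :
    (prodPerm g * sigmaOn σ {i} * (prodPerm g)⁻¹) x i = (g i * σ * (g i)⁻¹) (x i) := by
  simp [prodPerm, sigmaOn, Perm.mul_apply]

end

/-- if `g = g₁ × ⋯ × g_n` is an automorphism of `K^n \ Γ_K` normalizing the
covering group `G`, then each `g_i` equals `g₁` or `g₁ ∘ σ`, and `g₁ ∘ σ = σ ∘ g₁`. -/
theorem stmt8 {K : Type*} (σ : Equiv.Perm K)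
    (hinv : ∀ x : K, σ (σ x) = x)
    (n : ℕ) (hn : 2 ≤ n) (g : Fin n → Equiv.Perm K)
    (hnorm : ∀ u ∈ bigG σ n, prodPerm g * u * (prodPerm g)⁻¹ ∈ bigG σ n) :
    (∀ i : Fin n, g i = g ⟨0, by omega⟩ ∨ g i = g ⟨0, by omega⟩ * σ) ∧
    g ⟨0, by omega⟩ * σ = σ * g ⟨0, by omega⟩ := by
  set i₀ : Fin n := ⟨0, by omega⟩
  have hσ : σ * σ = 1 := Equiv.ext hinv
  have hconj : ∀ u ∈ bigG σ n,
      prodPerm g * u * (prodPerm g)⁻¹ ∈ wreathSubgroup (Subgroup.zpowers σ) n :=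
    fun u hu => bigG_le_wreathSubgroup σ (hnorm u hu)
  have hcomm : g i₀ * σ = σ * g i₀ := by
    rcases eq_one_or_eq_of_mem_zpowers hσ <| mem_of_apply_eq_of_mem_wreathSubgroup
        (hconj _ (Subgroup.subset_closure (Or.inr ⟨{i₀}, rfl⟩)))
        (prodPerm_conj_sigmaOn_singleton_apply σ g i₀) with h | h
    · obtain rfl : σ = 1 := mul_eq_left.1 (mul_inv_eq_one.1 h)
      rw [mul_one, one_mul]
    · exact mul_inv_eq_iff_eq_mul.1 h
  refine ⟨fun i => ?_, hcomm⟩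
  rcases eq_one_or_eq_of_mem_zpowers hσ <| mem_of_apply_eq_of_mem_wreathSubgroup
      (hconj _ (Subgroup.subset_closure (Or.inl ⟨swap i₀ i, rfl⟩)))
      (prodPerm_conj_permAct_swap_apply g i₀ i) with h | h
  · exact Or.inl (mul_inv_eq_one.1 h)
  · exact Or.inr (hcomm ▸ mul_inv_eq_iff_eq_mul.1 h)
end
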